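/- arXiv:math/0512155 — 7 statements merged into one kernel-verified Lean document; each statement's English description precedes it below -/
import Mathlib

section
/- Let G be a group generated by elements s and t, and suppose the relation s t s t ⋯ = t s t s ⋯ (with m letters on each side) holds for some odd integer m. Then in the quotient G/Γ₃(G), the images of s and t are equal. -/
open scoped commutatorElement

/-- If a group `G` is generated by `s` and `t` subject to the relation
`sts⋯ = tst⋯` (alternating products with `m = 2k+1` letters on each side,
`m` odd), then the images of `s` and `t` in `G/Γ₃(G)` coincide. -/
theorem stmt_3 {G : Type} [Group G] (s t : G)
    (hgen : Subgroup.closure ({s, t} : Set G) = ⊤)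
    (k : ℕ) (hrel : (s * t) ^ k * s = (t * s) ^ k * t) :
    (QuotientGroup.mk s : G ⧸ (⊤ : Subgroup G).lowerCentralSeries 2) = QuotientGroup.mk t := by
  set Q := G ⧸ (⊤ : Subgroup G).lowerCentralSeries 2 with hQ
  -- commutators are central in Q
  have hz : ∀ x y w : Q, Commute ⁅x, y⁆ w := by
    intro x y w
    rw [← commutatorElement_eq_one_iff_commute]
    obtain ⟨x, rfl⟩ := QuotientGroup.mk_surjective x
    obtain ⟨y, rfl⟩ := QuotientGroup.mk_surjective y
    obtain ⟨w, rfl⟩ := QuotientGroup.mk_surjective w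
    have hxy : ⁅x, y⁆ ∈ (⊤ : Subgroup G).lowerCentralSeries 1 := by
      rw [Subgroup.mem_lowerCentralSeries_succ_iff]
      exact Subgroup.subset_closure ⟨x, Subgroup.mem_top x, y, Subgroup.mem_top y, rfl⟩
    have key : ⁅⁅x, y⁆, w⁆ ∈ (⊤ : Subgroup G).lowerCentralSeries 2 := by
      rw [show (2:ℕ) = 1 + 1 from rfl, Subgroup.mem_lowerCentralSeries_succ_iff]
      exact Subgroup.subset_closure ⟨⁅x, y⁆, hxy, w, Subgroup.mem_top w, rfl⟩
    calc ⁅⁅(QuotientGroup.mk x : Q), QuotientGroup.mk y⁆, QuotientGroup.mk w⁆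
        = QuotientGroup.mk ⁅⁅x, y⁆, w⁆ := by
          simp only [commutatorElement_def, QuotientGroup.mk_mul, QuotientGroup.mk_inv]
      _ = 1 := (QuotientGroup.eq_one_iff _).mpr key
  set a : Q := QuotientGroup.mk s with ha'
  set b : Q := QuotientGroup.mk t with hb'
  have hrel' : (a * b) ^ k * a = (b * a) ^ k * b := by
    rw [ha', hb', ← QuotientGroup.mk_mul, ← QuotientGroup.mk_mul, ← QuotientGroup.mk_pow,
      ← QuotientGroup.mk_pow, ← QuotientGroup.mk_mul, ← QuotientGroup.mk_mul, hrel]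
  set c : Q := (b * a) ^ k with hc
  have h1 : a * c = c * b := by
    rw [hc, ← hrel']
    -- a * (b*a)^k = (a*b)^k * a
    have : (b * a) ^ k = a⁻¹ * (a * b) ^ k * a := by
      rw [show a⁻¹ * (a * b) ^ k * a = a⁻¹ * (a * b) ^ k * (a⁻¹)⁻¹ by group, ← conj_pow]
      group
    rw [this]; group
  set z : Q := ⁅c, b⁆ with hzdef
  have haz : a = z * b := by
    rw [hzdef, commutatorElement_def,
      show c * b * c⁻¹ * b⁻¹ * b = c * b * c⁻¹ by group, ← h1]
    group
  have hzb : Commute z b := hz c b b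
  have hcb : Commute c b := by
    have hc2 : c = z ^ k * (b * b) ^ k := by
      rw [hc, haz, show b * (z * b) = z * (b * b) by
        rw [← mul_assoc, (hzb.symm).eq, mul_assoc]]
      exact (hz c b (b * b)).mul_pow k
    rw [hc2]
    exact Commute.mul_left (hzb.pow_left k) ((Commute.refl b).mul_left (Commute.refl b) |>.pow_left k)
  have hz1 : z = 1 := by
    rw [hzdef]
    exact commutatorElement_eq_one_iff_commute.mpr hcb
  rw [ha', hb'] at haz ⊢
  rw [haz, hz1, one_mul]
end

section
/- Let G be the group with presentation ⟨a₁,b₁,…,a_g,b_g,σ | all generators commute pairwise except the pairs (a_i,b_i); [a_i,b_i] = σ² for all i; σ^{2(n+g-1)} = 1⟩ where g ≥ 1 and n ≥ 3. Then the commutator subgroup [G,G] is the cyclic subgroup generated by σ², and it is isomorphic to ℤ/(n+g-1). -/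
namespace Stmt6

open scoped commutatorElement

/-- Generators: `a_i = (i, true)`, `b_i = (i, false)` for `i < g`, and `σ`. -/
abbrev Gen (g : ℕ) := (Fin g × Bool) ⊕ Unit

def a (g : ℕ) (i : Fin g) : FreeGroup (Gen g) := FreeGroup.of (Sum.inl (i, true))
def b (g : ℕ) (i : Fin g) : FreeGroup (Gen g) := FreeGroup.of (Sum.inl (i, false))
def s (g : ℕ) : FreeGroup (Gen g) := FreeGroup.of (Sum.inr ())

/-- Relators: all generators commute pairwise except the pairs `(a_i, b_i)`;
`[a_i, b_i] = σ²`; and `σ^{2(n+g-1)} = 1`. -/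
def rels (g n : ℕ) : Set (FreeGroup (Gen g)) :=
  {r | ∃ i j : Fin g, i ≠ j ∧
      (r = ⁅a g i, a g j⁆ ∨ r = ⁅a g i, b g j⁆ ∨ r = ⁅b g i, b g j⁆)} ∪
  {r | ∃ i : Fin g, r = ⁅a g i, s g⁆ ∨ r = ⁅b g i, s g⁆} ∪
  {r | ∃ i : Fin g, r = ⁅a g i, b g i⁆ * ((s g) ^ 2)⁻¹} ∪
  {(s g) ^ (2 * (n + g - 1))}

abbrev G (g n : ℕ) := PresentedGroup (rels g n)

/-! ### An auxiliary Heisenberg-type group used to bound the order of `σ²` from below. -/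

section Heis
variable (g m : ℕ)

def H : Type := (Fin g → ℤ) × (Fin g → ℤ) × ZMod (2 * m)

variable {g m}

instance : Group (H g m) where
  mul p q := ⟨p.1 + q.1, p.2.1 + q.2.1,
    p.2.2 + q.2.2 + 2 * ((∑ i, p.1 i * q.2.1 i : ℤ) : ZMod (2 * m))⟩
  one := ⟨0, 0, 0⟩
  inv p := ⟨-p.1, -p.2.1, -p.2.2 + 2 * ((∑ i, p.1 i * p.2.1 i : ℤ) : ZMod (2 * m))⟩
  mul_assoc := by
    rintro ⟨x1, y1, z1⟩ ⟨x2, y2, z2⟩ ⟨x3, y3, z3⟩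
    refine Prod.ext (add_assoc _ _ _) (Prod.ext (add_assoc _ _ _) ?_)
    show z1 + z2 + 2 * ((∑ i, x1 i * y2 i : ℤ) : ZMod (2*m)) + z3
        + 2 * ((∑ i, (x1 + x2) i * y3 i : ℤ) : ZMod (2*m))
      = z1 + (z2 + z3 + 2 * ((∑ i, x2 i * y3 i : ℤ) : ZMod (2*m)))
        + 2 * ((∑ i, x1 i * (y2 + y3) i : ℤ) : ZMod (2*m))
    simp only [Pi.add_apply, add_mul, mul_add, Finset.sum_add_distrib]
    push_cast
    ring
  one_mul := by
    rintro ⟨x, y, z⟩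
    refine Prod.ext (zero_add _) (Prod.ext (zero_add _) ?_)
    show (0 : ZMod (2*m)) + z + 2 * ((∑ i, (0:ℤ) * y i : ℤ) : ZMod (2*m)) = z
    simp
  mul_one := by
    rintro ⟨x, y, z⟩
    refine Prod.ext (add_zero _) (Prod.ext (add_zero _) ?_)
    show z + (0 : ZMod (2*m)) + 2 * ((∑ i, x i * (0:ℤ) : ℤ) : ZMod (2*m)) = z
    simp
  inv_mul_cancel := by
    rintro ⟨x, y, z⟩
    refine Prod.ext (neg_add_cancel _) (Prod.ext (neg_add_cancel _) ?_)
    show -z + 2 * ((∑ i, x i * y i : ℤ) : ZMod (2*m)) + z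
        + 2 * ((∑ i, (-x) i * y i : ℤ) : ZMod (2*m)) = 0
    simp only [Pi.neg_apply, neg_mul, Finset.sum_neg_distrib]
    push_cast
    ring

lemma H.mul_def (p q : H g m) : p * q = ⟨p.1 + q.1, p.2.1 + q.2.1,
    p.2.2 + q.2.2 + 2 * ((∑ i, p.1 i * q.2.1 i : ℤ) : ZMod (2 * m))⟩ := rfl

lemma H.one_def : (1 : H g m) = ⟨0, 0, 0⟩ := rfl

def HA (i : Fin g) : H g m := ⟨Pi.single i 1, 0, 0⟩
def HB (i : Fin g) : H g m := ⟨0, Pi.single i 1, 0⟩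
def HS : H g m := ⟨0, 0, 1⟩

lemma HS_central (p : H g m) : Commute (HS) p := by
  obtain ⟨x, y, z⟩ := p
  unfold Commute SemiconjBy
  erw [H.mul_def, H.mul_def]
  simp [H.mul_def, HS, add_comm]
  rfl

lemma HS_pow (k : ℕ) : (HS : H g m) ^ k = ⟨0, 0, (k : ZMod (2 * m))⟩ := by
  induction k with
  | zero => simp [H.one_def]; rfl
  | succ k ih =>
    rw [pow_succ, ih]
    erw [H.mul_def]
    simp [H.mul_def, HS]
    rfl

lemma HA_comm (i j : Fin g) : Commute (HA i : H g m) (HA j) := by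
  unfold Commute SemiconjBy
  rw [H.mul_def, H.mul_def]
  simp [H.mul_def, HA, add_comm]
  rfl

lemma HB_comm (i j : Fin g) : Commute (HB i : H g m) (HB j) := by
  unfold Commute SemiconjBy
  rw [H.mul_def, H.mul_def]
  simp [H.mul_def, HB, add_comm]
  rfl

lemma HAB_comm (i j : Fin g) (hij : i ≠ j) : Commute (HA i : H g m) (HB j) := by
  unfold Commute SemiconjBy
  rw [H.mul_def, H.mul_def]
  simp [H.mul_def, HA, HB, add_comm, Pi.single_apply, Finset.sum_ite_eq, hij, hij.symm]
  rfl

lemma HAB_commutator (i : Fin g) : ⁅(HA i : H g m), HB i⁆ = (HS : H g m) ^ 2 := by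
  have h : (HA i : H g m) * HB i = (HS : H g m) ^ 2 * (HB i * HA i) := by
    rw [HS_pow, H.mul_def, H.mul_def]
    erw [H.mul_def]
    simp [H.mul_def, HA, HB, Pi.single_apply, Finset.sum_ite_eq]
    rfl
  rw [commutatorElement_def, h]
  group

end Heis

/-! ### The homomorphism from the presented group to the Heisenberg group. -/

section Map
variable (g m : ℕ)

def frel : Gen g → H g m := Sum.elim (fun p => if p.2 then HA p.1 else HB p.1) (fun _ => HS)

lemma lift_a (i : Fin g) : FreeGroup.lift (frel g m) (a g i) = (HA i : H g m) := by
  simp [a, frel]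

lemma lift_b (i : Fin g) : FreeGroup.lift (frel g m) (b g i) = (HB i : H g m) := by
  simp [b, frel]

lemma lift_s : FreeGroup.lift (frel g m) (s g) = (HS : H g m) := by
  simp [s, frel]

lemma hrels (n : ℕ) :
    ∀ r ∈ rels g n, FreeGroup.lift (frel g (n + g - 1)) r = 1 := by
  intro r hr
  rcases hr with (((⟨i, j, hij, h | h | h⟩ | ⟨i, h | h⟩) | ⟨i, h⟩) | h) <;> subst h
  · rw [map_commutatorElement, lift_a, lift_a]
    exact (HA_comm i j).commutator_eq
  · rw [map_commutatorElement, lift_a, lift_b]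
    exact (HAB_comm i j hij).commutator_eq
  · rw [map_commutatorElement, lift_b, lift_b]
    exact (HB_comm i j).commutator_eq
  · rw [map_commutatorElement, lift_a, lift_s]
    exact ((HS_central _).symm).commutator_eq
  · rw [map_commutatorElement, lift_b, lift_s]
    exact ((HS_central _).symm).commutator_eq
  · rw [map_mul, map_inv, map_pow, map_commutatorElement, lift_a, lift_b, lift_s,
      HAB_commutator]
    simp
  · rw [map_pow, lift_s, HS_pow]
    rw [ZMod.natCast_self]
    rfl

/-- The homomorphism `G g n →* H g (n+g-1)`. -/
noncomputable def φ (n : ℕ) : G g n →* H g (n + g - 1) :=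
  PresentedGroup.toGroup (hrels g n)

end Map

/-! ### Basic facts inside the presented group. -/

section InG
variable (g n : ℕ)

lemma mk_rel_one : ∀ r ∈ rels g n, PresentedGroup.mk (rels g n) r = 1 := fun r hr =>
  (QuotientGroup.eq_one_iff r).mpr (Subgroup.subset_normalClosure hr)

lemma sigma_central (x : G g n) : Commute (PresentedGroup.mk (rels g n) (s g)) x := by
  have hx : x ∈ Subgroup.closure (Set.range (PresentedGroup.of : Gen g → G g n)) := by
    rw [PresentedGroup.closure_range_of]; trivial
  induction hx using Subgroup.closure_induction with
  | mem y hy =>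
    obtain ⟨z, rfl⟩ := hy
    rcases z with ⟨i, tb⟩ | u
    · cases tb
      · have h1 : PresentedGroup.mk (rels g n) ⁅b g i, s g⁆ = 1 :=
          mk_rel_one g n _ (Or.inl (Or.inl (Or.inr ⟨i, Or.inr rfl⟩)))
        rw [map_commutatorElement] at h1
        exact (commutatorElement_eq_one_iff_commute.mp h1).symm
      · have h1 : PresentedGroup.mk (rels g n) ⁅a g i, s g⁆ = 1 :=
          mk_rel_one g n _ (Or.inl (Or.inl (Or.inr ⟨i, Or.inl rfl⟩)))
        rw [map_commutatorElement] at h1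
        exact (commutatorElement_eq_one_iff_commute.mp h1).symm
    · exact Commute.refl _
  | one => exact Commute.one_right _
  | mul x y _ _ hx hy => exact hx.mul_right hy
  | inv x _ hx => exact hx.inv_right

lemma ab_commutator_eq (i : Fin g) :
    ⁅(PresentedGroup.of (Sum.inl (i, true)) : G g n),
      PresentedGroup.of (Sum.inl (i, false))⁆ =
      (PresentedGroup.mk (rels g n) (s g)) ^ 2 := by
  have h1 : PresentedGroup.mk (rels g n) (⁅a g i, b g i⁆ * ((s g) ^ 2)⁻¹) = 1 :=
    mk_rel_one g n _ (Or.inl (Or.inr ⟨i, rfl⟩))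
  rw [map_mul, map_inv, map_pow, map_commutatorElement, mul_inv_eq_one] at h1
  exact h1

end InG

/-- For `g ≥ 1`, `n ≥ 3`: in the group `G = B_n(Σ_g)/Γ₃`, the commutator
subgroup `[G,G]` is the cyclic subgroup generated by `σ²`, and it is
isomorphic to `ℤ/(n+g-1)`. -/
theorem stmt_6 (g n : ℕ) (hg : 1 ≤ g) (hn : 3 ≤ n) :
    commutator (G g n) =
      Subgroup.zpowers ((PresentedGroup.mk (rels g n) (s g)) ^ 2) ∧
    Nonempty ((Subgroup.zpowers ((PresentedGroup.mk (rels g n) (s g)) ^ 2)) ≃*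
      Multiplicative (ZMod (n + g - 1))) := by
  have hm0 : n + g - 1 ≠ 0 := by omega
  set σ : G g n := PresentedGroup.mk (rels g n) (s g) with hσ
  set t : G g n := σ ^ 2 with ht
  set N : Subgroup (G g n) := Subgroup.zpowers t with hN
  have htcentral : ∀ x : G g n, Commute t x := fun x => (sigma_central g n x).pow_left 2
  have hN_normal : N.Normal := by
    constructor
    intro u hu y
    obtain ⟨k, rfl⟩ := Subgroup.mem_zpowers_iff.mp hu
    have hc : t ^ k * y = y * t ^ k := (htcentral y).zpow_left k
    rw [← hc, mul_inv_cancel_right]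
    exact Subgroup.zpow_mem _ (Subgroup.mem_zpowers t) k
  -- generators pairwise commute modulo N
  have hgen : ∀ y z : Gen g, ⁅(PresentedGroup.of y : G g n), PresentedGroup.of z⁆ ∈ N := by
    intro y z
    rcases y with ⟨i, ti⟩ | u
    · rcases z with ⟨j, tj⟩ | v
      · by_cases hij : i = j
        · subst hij
          rcases ti <;> rcases tj
          · rw [commutatorElement_self]; exact one_mem N
          · -- ⁅b_i, a_i⁆ = t⁻¹
            have h := ab_commutator_eq g n i
            have : ⁅(PresentedGroup.of (Sum.inl (i, false)) : G g n),
                PresentedGroup.of (Sum.inl (i, true))⁆ = t⁻¹ := by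
              rw [← commutatorElement_inv, h]
            rw [this]
            exact inv_mem (Subgroup.mem_zpowers t)
          · rw [ab_commutator_eq g n i]
            exact Subgroup.mem_zpowers t
          · rw [commutatorElement_self]; exact one_mem N
        · have key : ∀ r ∈ rels g n, PresentedGroup.mk (rels g n) r = 1 := mk_rel_one g n
          rcases ti <;> rcases tj
          · -- ⁅b_i, b_j⁆
            have h1 := key _ (Or.inl (Or.inl (Or.inl ⟨i, j, hij, Or.inr (Or.inr rfl)⟩)))
            rw [map_commutatorElement] at h1
            have h2 : ⁅(PresentedGroup.of (Sum.inl (i, false)) : G g n),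
                PresentedGroup.of (Sum.inl (j, false))⁆ = 1 := h1
            rw [h2]; exact one_mem N
          · -- ⁅b_i, a_j⁆ = ⁅a_j, b_i⁆⁻¹
            have h1 := key _ (Or.inl (Or.inl (Or.inl ⟨j, i, Ne.symm hij, Or.inr (Or.inl rfl)⟩)))
            rw [map_commutatorElement] at h1
            have h2 : ⁅(PresentedGroup.of (Sum.inl (j, true)) : G g n),
                PresentedGroup.of (Sum.inl (i, false))⁆ = 1 := h1
            have h3 : ⁅(PresentedGroup.of (Sum.inl (i, false)) : G g n),
                PresentedGroup.of (Sum.inl (j, true))⁆ = (1 : G g n) := by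
              rw [← commutatorElement_inv (PresentedGroup.of (Sum.inl (j, true)) : G g n)
                (PresentedGroup.of (Sum.inl (i, false))), h2, inv_one]
            rw [h3]; exact one_mem N
          · -- ⁅a_i, b_j⁆
            have h1 := key _ (Or.inl (Or.inl (Or.inl ⟨i, j, hij, Or.inr (Or.inl rfl)⟩)))
            rw [map_commutatorElement] at h1
            have h2 : ⁅(PresentedGroup.of (Sum.inl (i, true)) : G g n),
                PresentedGroup.of (Sum.inl (j, false))⁆ = 1 := h1
            rw [h2]; exact one_mem N
          · -- ⁅a_i, a_j⁆
            have h1 := key _ (Or.inl (Or.inl (Or.inl ⟨i, j, hij, Or.inl rfl⟩)))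
            rw [map_commutatorElement] at h1
            have h2 : ⁅(PresentedGroup.of (Sum.inl (i, true)) : G g n),
                PresentedGroup.of (Sum.inl (j, true))⁆ = 1 := h1
            rw [h2]; exact one_mem N
      · -- second is σ
        cases v
        have : Commute (PresentedGroup.of (Sum.inl (i, ti)) : G g n)
            (PresentedGroup.of (Sum.inr ())) := (sigma_central g n _).symm
        rw [this.commutator_eq]; exact one_mem N
    · cases u
      have : Commute (PresentedGroup.of (Sum.inr ()) : G g n)
          (PresentedGroup.of z) := sigma_central g n _
      rw [this.commutator_eq]; exact one_mem N
  -- the quotient G/N is abelian, hence [G,G] ≤ N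
  have key : ∀ x y : G g n, ⁅x, y⁆ ∈ N := by
    intro x y
    let π : G g n →* G g n ⧸ N := QuotientGroup.mk' N
    have hπsurj : Function.Surjective π := QuotientGroup.mk'_surjective N
    have hgen' : Subgroup.closure (Set.range (π ∘ (PresentedGroup.of : Gen g → G g n))) = ⊤ := by
      rw [Set.range_comp, ← MonoidHom.map_closure, PresentedGroup.closure_range_of,
        ← MonoidHom.range_eq_map]
      exact MonoidHom.range_eq_top.mpr hπsurj
    have hQcomm : ∀ u v : G g n ⧸ N, Commute u v := by
      intro u v
      have hu : u ∈ Subgroup.closure (Set.range (π ∘ (PresentedGroup.of : Gen g → G g n))) := by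
        rw [hgen']; trivial
      have hv : v ∈ Subgroup.closure (Set.range (π ∘ (PresentedGroup.of : Gen g → G g n))) := by
        rw [hgen']; trivial
      refine Subgroup.closure_induction₂ ?_ ?_ ?_ ?_ ?_ ?_ ?_ hu hv
      · rintro _ _ ⟨yy, rfl⟩ ⟨zz, rfl⟩
        have h1 : π ⁅PresentedGroup.of yy, PresentedGroup.of zz⁆ = 1 :=
          (QuotientGroup.eq_one_iff _).mpr (hgen yy zz)
        rw [map_commutatorElement] at h1
        exact commutatorElement_eq_one_iff_commute.mp h1
      · exact fun x hx => Commute.one_left x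
      · exact fun x hx => Commute.one_right x
      · exact fun x y z _ _ _ h1 h2 => h1.mul_left h2
      · exact fun y z x _ _ _ h1 h2 => h1.mul_right h2
      · exact fun x y _ _ h => h.inv_left
      · exact fun x y _ _ h => h.inv_right
    have h1 : π ⁅x, y⁆ = 1 := by
      rw [map_commutatorElement]
      exact (hQcomm (π x) (π y)).commutator_eq
    exact (QuotientGroup.eq_one_iff _).mp h1
  -- Part 1
  have part1 : commutator (G g n) = N := by
    apply le_antisymm
    · rw [commutator_def, Subgroup.commutator_le]
      intro x _ y _
      exact key x y
    · rw [Subgroup.zpowers_le]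
      rw [ht, hσ, ← ab_commutator_eq g n ⟨0, hg⟩]
      exact Subgroup.commutator_mem_commutator (Subgroup.mem_top _) (Subgroup.mem_top _)
  -- Part 2 : order of t is n + g - 1
  have ht_pow : t ^ (n + g - 1) = 1 := by
    rw [ht, ← pow_mul, hσ, ← map_pow]
    exact mk_rel_one g n _ (Or.inr rfl)
  have hdvd1 : orderOf t ∣ (n + g - 1) := orderOf_dvd_of_pow_eq_one ht_pow
  have hφσ : φ g n σ = (HS : H g (n + g - 1)) := by
    rw [hσ]
    exact PresentedGroup.toGroup.of (hrels g n)
  have hdvd2 : (n + g - 1) ∣ orderOf t := by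
    have h1 : (φ g n t) ^ orderOf t = 1 := by
      rw [← map_pow, pow_orderOf_eq_one, map_one]
    rw [ht, map_pow, hφσ, ← pow_mul, HS_pow, H.one_def] at h1
    have h2 : ((2 * orderOf t : ℕ) : ZMod (2 * (n + g - 1))) = 0 := by
      have := (Prod.ext_iff.mp h1).2
      exact (Prod.ext_iff.mp this).2
    have h3 : 2 * (n + g - 1) ∣ 2 * orderOf t :=
      (ZMod.natCast_eq_zero_iff _ _).mp h2
    exact (Nat.mul_dvd_mul_iff_left (by norm_num : 0 < 2)).mp h3
  have horder : orderOf t = n + g - 1 := Nat.dvd_antisymm hdvd1 hdvd2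
  have hcyc : IsCyclic N := by
    refine ⟨⟨⟨t, Subgroup.mem_zpowers t⟩, ?_⟩⟩
    intro x
    obtain ⟨k, hk⟩ := Subgroup.mem_zpowers_iff.mp x.2
    exact Subgroup.mem_zpowers_iff.mpr ⟨k, Subtype.ext (by simpa using hk)⟩
  have hcard : Nat.card N = n + g - 1 := by
    rw [hN, Nat.card_zpowers, horder]
  refine ⟨part1, ?_⟩
  rw [← hcard]
  exact ⟨(zmodCyclicMulEquiv hcyc).symm⟩

end Stmt6
end

section
/- Let G = (⊕_{i=1}^g F₂(a_i,b_i)) × ℤ/(2(n+g-1)) where F₂(a_i,b_i) are free groups of rank 2 and the cyclic factor is generated by σ. If σ^{2d} lies in the normal closure of the elements [a₁,b₁]σ^{-2}, …, [a_g,b_g]σ^{-2} in G, then (n+g-1) divides d. -/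
open Matrix

namespace Stmt7Aux

open scoped commutatorElement

variable (g : ℕ) (R : Type) [CommRing R]

@[ext] structure Heis where
  p : Fin g → R
  q : Fin g → R
  c : R

variable {g R}

instance : Mul (Heis g R) :=
  ⟨fun x y => ⟨x.p + y.p, x.q + y.q, x.c + y.c + 2 * (x.p ⬝ᵥ y.q)⟩⟩
instance : One (Heis g R) := ⟨⟨0, 0, 0⟩⟩
instance : Inv (Heis g R) := ⟨fun x => ⟨-x.p, -x.q, -x.c + 2 * (x.p ⬝ᵥ x.q)⟩⟩

@[simp] lemma mul_p (x y : Heis g R) : (x * y).p = x.p + y.p := rfl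
@[simp] lemma mul_q (x y : Heis g R) : (x * y).q = x.q + y.q := rfl
@[simp] lemma mul_c (x y : Heis g R) : (x * y).c = x.c + y.c + 2 * (x.p ⬝ᵥ y.q) := rfl
@[simp] lemma one_p : (1 : Heis g R).p = 0 := rfl
@[simp] lemma one_q : (1 : Heis g R).q = 0 := rfl
@[simp] lemma one_c : (1 : Heis g R).c = 0 := rfl
@[simp] lemma inv_p (x : Heis g R) : (x⁻¹).p = -x.p := rfl
@[simp] lemma inv_q (x : Heis g R) : (x⁻¹).q = -x.q := rfl
@[simp] lemma inv_c (x : Heis g R) : (x⁻¹).c = -x.c + 2 * (x.p ⬝ᵥ x.q) := rfl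

instance : Group (Heis g R) where
  mul_assoc x y z := by
    ext <;> simp [dotProduct_add, add_dotProduct] <;> ring
  one_mul x := by ext <;> simp
  mul_one x := by ext <;> simp
  inv_mul_cancel x := by
    ext <;> (try simp [neg_dotProduct]) <;> ring

variable (g R) in
/-- central element with only a `c`-component. -/
def zc (t : R) : Heis g R := ⟨0, 0, t⟩

@[simp] lemma zc_mul_zc (t t' : R) : (zc g R t * zc g R t') = zc g R (t + t') := by
  ext <;> simp [zc]

lemma zc_central (t : R) (k : Heis g R) : k * zc g R t = zc g R t * k := by
  ext <;> simp [zc] <;> ring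

lemma zc_pow (t : R) (k : ℕ) : (zc g R t) ^ k = zc g R (k • t) := by
  induction k with
  | zero => ext <;> simp [zc]
  | succ k ih =>
    rw [pow_succ, ih, zc_mul_zc, succ_nsmul]

variable (g R) in
/-- generator `x_i` -/
def X (i : Fin g) : Heis g R := ⟨Pi.single i 1, 0, 0⟩

variable (g R) in
/-- generator `y_i` -/
def Y (i : Fin g) : Heis g R := ⟨0, Pi.single i 1, 0⟩

lemma commXY (i : Fin g) : ⁅X g R i, Y g R i⁆ = zc g R 2 := by
  ext <;> simp [commutatorElement_def, X, Y, zc, dotProduct_single, single_dotProduct,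
    dotProduct_add, add_dotProduct, neg_dotProduct, dotProduct_neg] <;> ring

variable (g R) in
/-- the subgroup of elements supported on coordinate `i` -/
def supp (i : Fin g) : Subgroup (Heis g R) where
  carrier := {k | ∀ l, l ≠ i → k.p l = 0 ∧ k.q l = 0}
  one_mem' := by intro l _; simp
  mul_mem' := by
    intro x y hx hy l hl
    obtain ⟨h1, h2⟩ := hx l hl
    obtain ⟨h3, h4⟩ := hy l hl
    simp [h1, h2, h3, h4]
  inv_mem' := by
    intro x hx l hl
    obtain ⟨h1, h2⟩ := hx l hl
    simp [h1, h2]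

lemma supp_commute {i j : Fin g} (hij : i ≠ j) {x y : Heis g R}
    (hx : x ∈ supp g R i) (hy : y ∈ supp g R j) : Commute x y := by
  have hd : ∀ (u v : Heis g R), u ∈ supp g R i → v ∈ supp g R j → u.p ⬝ᵥ v.q = 0 := by
    intro u v hu hv
    apply Finset.sum_eq_zero
    intro l _
    rcases eq_or_ne l i with rfl | hl
    · rw [(hv l hij).2, mul_zero]
    · rw [(hu l hl).1, zero_mul]
  have h1 := hd x y hx hy
  have h2 : ∀ (u v : Heis g R), u ∈ supp g R j → v ∈ supp g R i → u.p ⬝ᵥ v.q = 0 := by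
    intro u v hu hv
    apply Finset.sum_eq_zero
    intro l _
    rcases eq_or_ne l j with rfl | hl
    · rw [(hv l hij.symm).2, mul_zero]
    · rw [(hu l hl).1, zero_mul]
  have h3 := h2 y x hy hx
  unfold Commute SemiconjBy
  ext <;> simp [h1, h3] <;> ring

variable (g R) in
/-- map from one free factor -/
def φ (i : Fin g) : FreeGroup Bool →* Heis g R :=
  FreeGroup.lift (fun bb => if bb then X g R i else Y g R i)

lemma φ_mem_supp (i : Fin g) (w : FreeGroup Bool) : φ g R i w ∈ supp g R i := by
  induction w using FreeGroup.induction_on with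
  | C1 => rw [_root_.map_one]; exact one_mem _
  | of x =>
    have h0 : (pure x : FreeGroup Bool) = FreeGroup.of x := rfl
    have h1 : φ g R i (FreeGroup.of x) = if x then X g R i else Y g R i :=
      FreeGroup.lift_apply_of
    rw [h1]
    cases x <;> · intro l hl; simp [X, Y, Pi.single_eq_of_ne hl]
  | inv_of x hx => rw [_root_.map_inv]; exact inv_mem hx
  | mul x y hx hy => rw [_root_.map_mul]; exact mul_mem hx hy

lemma φ_comm : Pairwise fun i j => ∀ (x y : FreeGroup Bool),
    Commute (φ g R i x) (φ g R j y) := by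
  intro i j hij x y
  exact supp_commute hij (φ_mem_supp i x) (φ_mem_supp j y)

variable (g R) in
/-- map from the direct sum of free factors -/
def Ψ : (∀ _ : Fin g, FreeGroup Bool) →* Heis g R :=
  MonoidHom.noncommPiCoprod (φ g R) φ_comm

variable (g R) in
/-- map from the cyclic part -/
def σK : Multiplicative R →* Heis g R where
  toFun t := zc g R t.toAdd
  map_one' := rfl
  map_mul' t t' := by simp

variable (g R) in
/-- the full homomorphism -/
def Φ : ((∀ _ : Fin g, FreeGroup Bool) × Multiplicative R) →* Heis g R where
  toFun x := Ψ g R x.1 * σK g R x.2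
  map_one' := by simp
  map_mul' x y := by
    show Ψ g R (x.1 * y.1) * σK g R (x.2 * y.2)
        = (Ψ g R x.1 * σK g R x.2) * (Ψ g R y.1 * σK g R y.2)
    rw [_root_.map_mul, _root_.map_mul]
    have hc : Commute (Ψ g R y.1) (σK g R x.2) := zc_central _ _
    exact hc.mul_mul_mul_comm _ _

lemma Φ_mulSingle_true (i : Fin g) :
    Φ g R (Pi.mulSingle i (FreeGroup.of true), 1) = X g R i := by
  show Ψ g R (Pi.mulSingle i (FreeGroup.of true)) * σK g R 1 = X g R i
  rw [_root_.map_one, mul_one]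
  show MonoidHom.noncommPiCoprod (φ g R) φ_comm _ = _
  rw [MonoidHom.noncommPiCoprod_mulSingle]
  exact FreeGroup.lift_apply_of

lemma Φ_mulSingle_false (i : Fin g) :
    Φ g R (Pi.mulSingle i (FreeGroup.of false), 1) = Y g R i := by
  show Ψ g R (Pi.mulSingle i (FreeGroup.of false)) * σK g R 1 = Y g R i
  rw [_root_.map_one, mul_one]
  show MonoidHom.noncommPiCoprod (φ g R) φ_comm _ = _
  rw [MonoidHom.noncommPiCoprod_mulSingle]
  exact FreeGroup.lift_apply_of

lemma Φ_sigma : Φ g R (1, Multiplicative.ofAdd 1) = zc g R 1 := by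
  show Ψ g R 1 * σK g R (Multiplicative.ofAdd 1) = zc g R 1
  rw [_root_.map_one, one_mul]
  rfl

end Stmt7Aux



namespace Stmt7

open scoped commutatorElement

open Stmt7Aux

/-- `G = (⊕_{i=1}^g F₂(a_i,b_i)) × ℤ/(2(n+g-1))`. -/
abbrev G (g n : ℕ) := (∀ _ : Fin g, FreeGroup Bool) × Multiplicative (ZMod (2 * (n + g - 1)))

/-- `a_i`, the generator `a` of the `i`-th free factor. -/
def a (g n : ℕ) (i : Fin g) : G g n := (Pi.mulSingle i (FreeGroup.of true), 1)

/-- `b_i`, the generator `b` of the `i`-th free factor. -/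
def b (g n : ℕ) (i : Fin g) : G g n := (Pi.mulSingle i (FreeGroup.of false), 1)

/-- `σ`, the generator of the cyclic factor. -/
def s (g n : ℕ) : G g n := (1, Multiplicative.ofAdd 1)

/-- If `σ^{2d}` lies in the normal closure of `[a_1,b_1]σ⁻², …, [a_g,b_g]σ⁻²`
in `G`, then `n+g-1` divides `d`. -/
theorem stmt_7 (g n d : ℕ) (hg : 1 ≤ g) (hn : 3 ≤ n) (hd : 0 < d)
    (h : (s g n) ^ (2 * d) ∈
      Subgroup.normalClosure {x : G g n | ∃ i : Fin g,
        x = ⁅a g n i, b g n i⁆ * ((s g n) ^ 2)⁻¹}) :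
    (n + g - 1) ∣ d := by
  let R : Type := ZMod (2 * (n + g - 1))
  let F : G g n →* Heis g R := Φ g R
  have hΦa : ∀ i, F (a g n i) = X g R i := fun i => Φ_mulSingle_true i
  have hΦb : ∀ i, F (b g n i) = Y g R i := fun i => Φ_mulSingle_false i
  have hΦs : F (s g n) = zc g R 1 := Φ_sigma
  have hker : Subgroup.normalClosure {x : G g n | ∃ i : Fin g,
      x = ⁅a g n i, b g n i⁆ * ((s g n) ^ 2)⁻¹} ≤ F.ker := by
    apply Subgroup.normalClosure_le_normal
    rintro x ⟨i, rfl⟩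
    rw [SetLike.mem_coe, MonoidHom.mem_ker, _root_.map_mul, _root_.map_inv, _root_.map_pow,
      map_commutatorElement, hΦa, hΦb, hΦs, commXY, zc_pow]
    rw [show ((2 : ℕ) • (1 : R)) = 2 by simp]
    exact mul_inv_cancel _
  have h1 : F ((s g n) ^ (2 * d)) = 1 := hker h
  rw [_root_.map_pow, hΦs, zc_pow] at h1
  have h2 : ((2 * d : ℕ) : R) = 0 := by
    have := congrArg Heis.c h1
    simpa [zc, nsmul_eq_mul] using this
  have h3 : 2 * (n + g - 1) ∣ 2 * d :=
    (ZMod.natCast_eq_zero_iff (2 * d) (2 * (n + g - 1))).mp h2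
  obtain ⟨k, hk⟩ := h3
  rw [mul_assoc] at hk
  exact ⟨k, Nat.eq_of_mul_eq_mul_left two_pos hk⟩

end Stmt7
end

section
/- In the Artin braid group B_n with n ≥ 3, the commutator subgroup Γ₂(B_n) equals the normal closure of the single element σ₁σ₂^{-1}. -/
/-- The braid relations on generators `σ_1, …, σ_m` (indexed by `Fin m`). -/
def braidRels (m : ℕ) : Set (FreeGroup (Fin m)) :=
  {r | ∃ i j : Fin m, (i : ℕ) + 2 ≤ (j : ℕ) ∧
      r = FreeGroup.of i * FreeGroup.of j * (FreeGroup.of i)⁻¹ * (FreeGroup.of j)⁻¹} ∪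
  {r | ∃ i j : Fin m, (j : ℕ) = (i : ℕ) + 1 ∧
      r = FreeGroup.of i * FreeGroup.of j * FreeGroup.of i *
        (FreeGroup.of j * FreeGroup.of i * FreeGroup.of j)⁻¹}

open scoped commutatorElement

lemma mk_rel_one {m : ℕ} {r : FreeGroup (Fin m)} (h : r ∈ braidRels m) :
    PresentedGroup.mk (braidRels m) r = 1 := by
  rw [PresentedGroup.mk_eq_one_iff]
  exact Subgroup.subset_normalClosure h

lemma braid_rel {m : ℕ} (i j : Fin m) (h : (j : ℕ) = (i : ℕ) + 1) :
    (PresentedGroup.of i * PresentedGroup.of j * PresentedGroup.of i :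
      PresentedGroup (braidRels m)) =
      PresentedGroup.of j * PresentedGroup.of i * PresentedGroup.of j := by
  have := mk_rel_one (Or.inr ⟨i, j, h, rfl⟩)
  simp only [map_mul, map_inv] at this
  rw [mul_inv_eq_one] at this
  exact this

lemma comm_rel {m : ℕ} (i j : Fin m) (h : (i : ℕ) + 2 ≤ (j : ℕ)) :
    (PresentedGroup.of i * PresentedGroup.of j :
      PresentedGroup (braidRels m)) = PresentedGroup.of j * PresentedGroup.of i := by
  have := mk_rel_one (Or.inl ⟨i, j, h, rfl⟩)
  simp only [map_mul, map_inv] at this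
  rw [show (PresentedGroup.mk (braidRels m)) (FreeGroup.of i) *
      (PresentedGroup.mk (braidRels m)) (FreeGroup.of j) *
      ((PresentedGroup.mk (braidRels m)) (FreeGroup.of i))⁻¹ *
      ((PresentedGroup.mk (braidRels m)) (FreeGroup.of j))⁻¹ =
      ⁅(PresentedGroup.mk (braidRels m)) (FreeGroup.of i),
        (PresentedGroup.mk (braidRels m)) (FreeGroup.of j)⁆ from rfl,
    commutatorElement_eq_one_iff_mul_comm] at this
  exact this


lemma key (m : ℕ) (hm : 2 ≤ m) :
    commutator (PresentedGroup (braidRels m)) =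
      Subgroup.normalClosure
        {PresentedGroup.of (rels := braidRels m) (⟨0, by omega⟩ : Fin m) *
          (PresentedGroup.of (rels := braidRels m) (⟨1, by omega⟩ : Fin m))⁻¹} := by
  set g : PresentedGroup (braidRels m) :=
    PresentedGroup.of (⟨0, by omega⟩ : Fin m) *
      (PresentedGroup.of (⟨1, by omega⟩ : Fin m))⁻¹ with hg
  set N := Subgroup.normalClosure ({g} : Set (PresentedGroup (braidRels m))) with hN
  have hNn : N.Normal := Subgroup.normalClosure_normal
  apply le_antisymm
  · -- commutator ≤ N
    let π := QuotientGroup.mk' N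
    have hπ : ∀ x, π x = 1 ↔ x ∈ N := fun x => QuotientGroup.eq_one_iff x
    -- adjacent generators are identified in the quotient
    have adj : ∀ k (hk : k + 1 < m),
        π (PresentedGroup.of ⟨k + 1, hk⟩) = π (PresentedGroup.of ⟨k, by omega⟩) := by
      intro k
      induction k with
      | zero =>
        intro hk
        have : π g = 1 := (hπ g).mpr (Subgroup.subset_normalClosure rfl)
        rw [hg, map_mul, map_inv, mul_inv_eq_one] at this
        exact this.symm
      | succ k ih =>
        intro hk
        have hk1 : k + 1 < m := by omega
        have IH := ih hk1
        set a := π (PresentedGroup.of (⟨k, by omega⟩ : Fin m)) with ha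
        set c := π (PresentedGroup.of (⟨k + 2, by omega⟩ : Fin m)) with hc
        have hcomm : a * c = c * a := by
          have := comm_rel (⟨k, by omega⟩ : Fin m) (⟨k + 2, by omega⟩ : Fin m) (by simp)
          have := congrArg π this
          simpa [map_mul] using this
        have hbraid : a * c * a = c * a * c := by
          have := braid_rel (⟨k + 1, hk1⟩ : Fin m) (⟨k + 2, by omega⟩ : Fin m) (by simp)
          have h2 := congrArg π this
          simp only [map_mul] at h2
          rw [IH] at h2
          exact h2
        have hac : a = c := by
          have e1 : a * (a * c) = a * (c * c) := by
            calc a * (a * c) = a * (c * a) := by rw [hcomm]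
            _ = c * a * c := by rw [← hbraid]; group
            _ = a * c * c := by rw [← hcomm]
            _ = a * (c * c) := by group
          have e2 : a * c = c * c := mul_left_cancel e1
          exact mul_right_cancel e2
        show c = π (PresentedGroup.of ⟨k + 1, hk1⟩)
        rw [IH]
        exact hac.symm
    have all0 : ∀ i : Fin m, π (PresentedGroup.of i) =
        π (PresentedGroup.of (⟨0, by omega⟩ : Fin m)) := by
      intro i
      obtain ⟨v, hv⟩ := i
      induction v with
      | zero => rfl
      | succ v ih => rw [adj v hv, ih (by omega)]
    set x0 := π (PresentedGroup.of (⟨0, by omega⟩ : Fin m)) with hx0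
    have hzp : ∀ x : PresentedGroup (braidRels m), π x ∈ Subgroup.zpowers x0 := by
      intro x
      have := PresentedGroup.generated_by (braidRels m)
        (Subgroup.comap π (Subgroup.zpowers x0)) ?_ x
      · exact this
      · intro j
        simp only [Subgroup.mem_comap]
        rw [all0 j]
        exact Subgroup.mem_zpowers x0
    rw [commutator_def]
    rw [Subgroup.commutator_le]
    intro p _ q _
    rw [← hπ]
    rw [map_commutatorElement]
    rw [commutatorElement_eq_one_iff_mul_comm]
    obtain ⟨j, hj⟩ := hzp p
    obtain ⟨k, hk⟩ := hzp q
    rw [← hj, ← hk]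
    exact (Commute.zpow_zpow (Commute.refl x0) j k)
  · -- N ≤ commutator
    have : Subgroup.Normal (commutator (PresentedGroup (braidRels m))) := inferInstance
    apply Subgroup.normalClosure_le_normal
    intro x hx
    rw [Set.mem_singleton_iff] at hx
    subst hx
    set a := PresentedGroup.of (rels := braidRels m) (⟨0, by omega⟩ : Fin m) with ha
    set b := PresentedGroup.of (rels := braidRels m) (⟨1, by omega⟩ : Fin m) with hb
    have hbr : a * b * a = b * a * b :=
      braid_rel (⟨0, by omega⟩ : Fin m) (⟨1, by omega⟩ : Fin m) (by simp)
    have hcomm : a * b⁻¹ = ⁅a, a * b⁆ := by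
      rw [commutatorElement_def]
      have h1 : a * (a * b) * a⁻¹ * (a * b)⁻¹ * (a * b * a) = a * b⁻¹ * (a * b * a) := by
        conv_rhs => rw [hbr]
        group
      exact (mul_right_cancel h1).symm
    rw [SetLike.mem_coe, hg, hcomm, commutator_def]
    exact Subgroup.commutator_mem_commutator (Subgroup.mem_top a) (Subgroup.mem_top (a * b))

/-- The Artin braid group on `n` strands. -/
abbrev BraidGroup (n : ℕ) := PresentedGroup (braidRels (n - 1))

/-- For `n ≥ 3`, the commutator subgroup `Γ₂(B_n)` equals the normal closure
of the single element `σ₁σ₂⁻¹`. -/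
theorem stmt_9 (n : ℕ) (hn : 3 ≤ n) :
    commutator (BraidGroup n) =
      Subgroup.normalClosure
        {PresentedGroup.of (rels := braidRels (n - 1)) (⟨0, by omega⟩ : Fin (n - 1)) *
          (PresentedGroup.of (rels := braidRels (n - 1)) (⟨1, by omega⟩ : Fin (n - 1)))⁻¹} := by
  exact key (n - 1) (by omega)
end

section
/- Let B = ⟨α, β, γ | α² central, β² central, α²β² = γ²⟩ (a presentation of B₂(T²)). Then the quotient of B by the subgroup generated by α² and β² is isomorphic to ℤ₂ ∗ ℤ₂ ∗ ℤ₂, the free product of three copies of the cyclic group of order 2. -/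
namespace Stmt11

open scoped commutatorElement

/-- Relators for `B = ⟨α, β, γ | α² central, β² central, α²β² = γ²⟩`,
with `α = of 0`, `β = of 1`, `γ = of 2`. -/
def Brels : Set (FreeGroup (Fin 3)) :=
  {⁅(FreeGroup.of (0 : Fin 3)) ^ 2, FreeGroup.of (1 : Fin 3)⁆,
   ⁅(FreeGroup.of (0 : Fin 3)) ^ 2, FreeGroup.of (2 : Fin 3)⁆,
   ⁅(FreeGroup.of (1 : Fin 3)) ^ 2, FreeGroup.of (0 : Fin 3)⁆,
   ⁅(FreeGroup.of (1 : Fin 3)) ^ 2, FreeGroup.of (2 : Fin 3)⁆,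
   (FreeGroup.of (0 : Fin 3)) ^ 2 * (FreeGroup.of (1 : Fin 3)) ^ 2 *
     ((FreeGroup.of (2 : Fin 3)) ^ 2)⁻¹}

/-- The group `B` (a presentation of `B₂(T²)`). -/
abbrev B := PresentedGroup Brels

/-- `ℤ₂ ∗ ℤ₂ ∗ ℤ₂`, presented on three generators each of order 2. -/
abbrev W3 := PresentedGroup {r : FreeGroup (Fin 3) | ∃ i : Fin 3, r = (FreeGroup.of i) ^ 2}

def α : B := PresentedGroup.of (0 : Fin 3)
def β : B := PresentedGroup.of (1 : Fin 3)
def γ : B := PresentedGroup.of (2 : Fin 3)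

/-- In `W3`, every generator squares to the identity. -/
lemma w3_sq (i : Fin 3) : (PresentedGroup.of i : W3) ^ 2 = 1 := by
  have : (PresentedGroup.mk _ (FreeGroup.of i ^ 2) : W3) = 1 := by
    apply (QuotientGroup.eq_one_iff _).mpr
    exact Subgroup.subset_normalClosure ⟨i, rfl⟩
  simpa [PresentedGroup.of, map_pow] using this

lemma hφ : ∀ r ∈ Brels,
    FreeGroup.lift (fun i => (PresentedGroup.of i : W3)) r = 1 := by
  intro r hr
  simp only [Brels, Set.mem_insert_iff, Set.mem_singleton_iff] at hr
  rcases hr with rfl | rfl | rfl | rfl | rfl <;>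
    simp [commutatorElement_def, map_mul, map_pow, map_inv, FreeGroup.lift_apply_of, w3_sq]

/-- The map `B → W3`. -/
def φ : B →* W3 := PresentedGroup.toGroup hφ

abbrev N : Subgroup B := Subgroup.normalClosure ({α ^ 2, β ^ 2} : Set B)

lemma rel_eq_one {r : FreeGroup (Fin 3)} (hr : r ∈ Brels) :
    (PresentedGroup.mk Brels r : B) = 1 :=
  (QuotientGroup.eq_one_iff _).mpr (Subgroup.subset_normalClosure hr)

lemma γsq : γ ^ 2 = α ^ 2 * β ^ 2 := by
  have := rel_eq_one (r := (FreeGroup.of (0 : Fin 3)) ^ 2 * (FreeGroup.of (1 : Fin 3)) ^ 2 *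
     ((FreeGroup.of (2 : Fin 3)) ^ 2)⁻¹) (by simp [Brels])
  simp only [map_mul, map_pow, map_inv] at this
  have h : α ^ 2 * β ^ 2 * (γ ^ 2)⁻¹ = 1 := this
  have := mul_eq_one_iff_eq_inv.mp h
  simp at this
  rw [this]

lemma mem_N_sq (i : Fin 3) : (PresentedGroup.of i : B) ^ 2 ∈ N := by
  fin_cases i
  · exact Subgroup.subset_normalClosure (Or.inl rfl)
  · exact Subgroup.subset_normalClosure (Or.inr rfl)
  · show γ ^ 2 ∈ N
    rw [γsq]
    exact mul_mem (Subgroup.subset_normalClosure (Or.inl rfl))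
      (Subgroup.subset_normalClosure (Or.inr rfl))

lemma hψ : ∀ r ∈ {r : FreeGroup (Fin 3) | ∃ i : Fin 3, r = (FreeGroup.of i) ^ 2},
    FreeGroup.lift (fun i => ((PresentedGroup.of i : B) : B ⧸ N)) r = 1 := by
  rintro r ⟨i, rfl⟩
  rw [map_pow, FreeGroup.lift_apply_of, ← QuotientGroup.mk_pow]
  exact (QuotientGroup.eq_one_iff _).mpr (mem_N_sq i)

/-- The map `W3 → B ⧸ N`. -/
def ψ : W3 →* B ⧸ N := PresentedGroup.toGroup hψ

lemma N_le_ker : N ≤ φ.ker := by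
  apply Subgroup.normalClosure_le_normal
  rintro x (rfl | rfl) <;>
  · show _ ∈ φ.ker
    rw [MonoidHom.mem_ker, map_pow]
    exact w3_sq _

/-- The induced map `B ⧸ N → W3`. -/
def φ' : B ⧸ N →* W3 := QuotientGroup.lift N φ N_le_ker

lemma φ'_mk (i : Fin 3) : φ' ((PresentedGroup.of i : B) : B ⧸ N) = PresentedGroup.of i := by
  show φ (PresentedGroup.of i) = _
  exact PresentedGroup.toGroup.of hφ

/-- The quotient of `B` by the (central, hence normal) subgroup generated by
`α²` and `β²` is isomorphic to `ℤ₂ ∗ ℤ₂ ∗ ℤ₂`. -/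
theorem stmt_11 :
    Nonempty ((B ⧸ Subgroup.normalClosure ({α ^ 2, β ^ 2} : Set B)) ≃* W3) := by
  refine ⟨MonoidHom.toMulEquiv φ' ψ ?_ ?_⟩
  · -- ψ ∘ φ' = id on B ⧸ N
    have : (ψ.comp φ').comp (QuotientGroup.mk' N) =
        (MonoidHom.id _).comp (QuotientGroup.mk' N) := by
      apply PresentedGroup.ext
      intro i
      simp only [MonoidHom.comp_apply, QuotientGroup.mk'_apply, MonoidHom.id_apply]
      rw [φ'_mk]
      exact PresentedGroup.toGroup.of hψ
    refine MonoidHom.ext fun x => ?_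
    obtain ⟨y, rfl⟩ := QuotientGroup.mk'_surjective N x
    exact DFunLike.congr_fun this y
  · -- φ' ∘ ψ = id on W3
    apply PresentedGroup.ext
    intro i
    simp only [MonoidHom.comp_apply, MonoidHom.id_apply]
    have h1 : ψ (PresentedGroup.of i) = ((PresentedGroup.of i : B) : B ⧸ N) :=
      PresentedGroup.toGroup.of hψ
    rw [h1, φ'_mk]

end Stmt11
end

section
/- In the free product G = ℤ₂ ∗ ℤ₂ ∗ ℤ₂, every element of Γ_i(G)/Γ_{i+1}(G) has order dividing 2, for every i ≥ 2; hence each quotient Γ_i(G)/Γ_{i+1}(G) is an elementary abelian 2-group. -/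
namespace Stmt16

open scoped commutatorElement

/-- `ℤ₂ ∗ ℤ₂ ∗ ℤ₂`, presented on three generators each of order 2. -/
abbrev W3 := PresentedGroup {r : FreeGroup (Fin 3) | ∃ i : Fin 3, r = (FreeGroup.of i) ^ 2}

lemma sq_mem_succ {G : Type*} [Group G] (h0 : ∀ x : G, x ^ 2 ∈ (⊤ : Subgroup G).lowerCentralSeries 1) :
    ∀ i : ℕ, ∀ x ∈ (⊤ : Subgroup G).lowerCentralSeries i, x ^ 2 ∈ (⊤ : Subgroup G).lowerCentralSeries (i + 1) := by
  intro i
  induction i with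
  | zero => exact fun x _ => h0 x
  | succ n ih =>
    set K : Subgroup G :=
      { carrier := {x | x ∈ (⊤ : Subgroup G).lowerCentralSeries (n + 1) ∧ x ^ 2 ∈ (⊤ : Subgroup G).lowerCentralSeries (n + 2)}
        one_mem' := ⟨one_mem _, by simpa using one_mem _⟩
        mul_mem' := fun {a b} ha hb => ⟨mul_mem ha.1 hb.1, by
          have hc : ⁅a⁻¹, b⁆ ∈ (⊤ : Subgroup G).lowerCentralSeries (n + 2) := by
            show ⁅a⁻¹, b⁆ ∈ ⁅(⊤ : Subgroup G).lowerCentralSeries (n + 1), ⊤⁆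
            exact Subgroup.commutator_mem_commutator (inv_mem ha.1) (Subgroup.mem_top b)
          have h : (a * b) ^ 2 = a ^ 2 * ⁅a⁻¹, b⁆ * b ^ 2 := by rw [pow_two, pow_two, pow_two]; group
          rw [h]; exact mul_mem (mul_mem ha.2 hc) hb.2⟩
        inv_mem' := fun {a} ha => ⟨inv_mem ha.1, by rw [inv_pow]; exact inv_mem ha.2⟩ } with hK
    have hle : (⊤ : Subgroup G).lowerCentralSeries (n + 1) ≤ K := by
      rw [Subgroup.lowerCentralSeries_succ]
      apply Subgroup.closure_le K |>.2
      rintro x ⟨p, hp, q, -, rfl⟩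
      have hpq : ⁅p, q⁆ ∈ (⊤ : Subgroup G).lowerCentralSeries (n + 1) :=
        Subgroup.commutator_mem_commutator hp (Subgroup.mem_top q)
      have h1 : ⁅⁅p, q⁆, p⁆ ∈ (⊤ : Subgroup G).lowerCentralSeries (n + 2) :=
        Subgroup.commutator_mem_commutator hpq (Subgroup.mem_top p)
      have h2 : ⁅p ^ 2, q⁆ ∈ (⊤ : Subgroup G).lowerCentralSeries (n + 2) :=
        Subgroup.commutator_mem_commutator (ih p hp) (Subgroup.mem_top q)
      have key : (p * q * p⁻¹ * q⁻¹) ^ 2 = ⁅⁅p, q⁆, p⁆ * ⁅p ^ 2, q⁆ := by rw [pow_two, pow_two]; group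
      exact ⟨hpq, by rw [commutatorElement_def, key]; exact mul_mem h1 h2⟩
    exact fun x hx => (hle hx).2

lemma sq_mem_commutator (x : W3) : x ^ 2 ∈ commutator W3 := by
  set K : Subgroup W3 :=
    { carrier := {x | x ^ 2 ∈ commutator W3}
      one_mem' := by simpa using one_mem _
      mul_mem' := fun {a b} ha hb => by
        have hc : ⁅a⁻¹, b⁆ ∈ commutator W3 :=
          Subgroup.commutator_mem_commutator (Subgroup.mem_top a⁻¹) (Subgroup.mem_top b)
        have h : (a * b) ^ 2 = a ^ 2 * ⁅a⁻¹, b⁆ * b ^ 2 := by rw [pow_two, pow_two, pow_two]; group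
        show (a * b) ^ 2 ∈ commutator W3
        rw [h]; exact mul_mem (mul_mem ha hc) hb
      inv_mem' := fun {a} ha => by
        show a⁻¹ ^ 2 ∈ commutator W3
        rw [inv_pow]; exact inv_mem ha } with hKdef
  have hmk : ∀ w : FreeGroup (Fin 3),
      (QuotientGroup.mk w : W3) ∈ K := by
    intro w
    induction w using FreeGroup.induction_on with
    | C1 => exact one_mem K
    | of i =>
      show ((QuotientGroup.mk (FreeGroup.of i) : W3)) ^ 2 ∈ commutator W3
      have : ((QuotientGroup.mk (FreeGroup.of i) : W3)) ^ 2
          = (QuotientGroup.mk ((FreeGroup.of i) ^ 2) : W3) := rfl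
      have h1 : (QuotientGroup.mk (FreeGroup.of i ^ 2) : W3) = 1 :=
        (QuotientGroup.eq_one_iff _).2 (Subgroup.subset_normalClosure ⟨i, rfl⟩)
      exact (congrArg (· ∈ commutator W3) (this.trans h1)).mpr (one_mem _)
    | inv_of i h => exact inv_mem h
    | mul u v hu hv => exact mul_mem hu hv
  obtain ⟨w, rfl⟩ := QuotientGroup.mk_surjective (x : W3)
  exact hmk w

/-- In `G = ℤ₂ ∗ ℤ₂ ∗ ℤ₂`, every element of `Γ_i(G)/Γ_{i+1}(G)` has order
dividing 2 for every `i ≥ 2` (here `lowerCentralSeries _ j` is the paper's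
`Γ_{j+1}`, so `j ≥ 1`): the square of any element of `Γ_i(G)` lies in
`Γ_{i+1}(G)`, hence each quotient is an elementary abelian 2-group. -/
theorem stmt_16 (i : ℕ) (hi : 1 ≤ i) :
    ∀ x ∈ (⊤ : Subgroup W3).lowerCentralSeries i, x ^ 2 ∈ (⊤ : Subgroup W3).lowerCentralSeries (i + 1) := by
  exact sq_mem_succ (fun x => sq_mem_commutator x) i

end Stmt16
end

section
/- Let 1 → K → E → Q → 1 be a central extension of groups. If the projection p : E → Q restricts to an isomorphism Γ₂(E) → Γ₂(Q) (equivalently K ∩ Γ₂(E) = 1) and Q is residually nilpotent, then E is residually nilpotent. -/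
/-- Let `1 → K → E → Q → 1` be a central extension (i.e. `p : E → Q` is a
surjective homomorphism whose kernel is central). If `ker p ∩ Γ₂(E) = 1`
(so `p` restricts to an isomorphism `Γ₂(E) → Γ₂(Q)`) and `Q` is residually
nilpotent, then `E` is residually nilpotent. -/
theorem stmt_18 {E Q : Type} [Group E] [Group Q] (p : E →* Q)
    (hsurj : Function.Surjective p)
    (hcentral : p.ker ≤ Subgroup.center E)
    (hinj : p.ker ⊓ commutator E = ⊥)
    (hQ : (⨅ i : ℕ, (⊤ : Subgroup Q).lowerCentralSeries i) = ⊥) :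
    (⨅ i : ℕ, (⊤ : Subgroup E).lowerCentralSeries i) = ⊥ := by
  rw [eq_bot_iff, ← hinj]
  intro x hx
  simp only [Subgroup.mem_iInf] at hx
  constructor
  · -- x ∈ ker p
    have hpx : p x ∈ (⨅ i : ℕ, (⊤ : Subgroup Q).lowerCentralSeries i) := by
      simp only [Subgroup.mem_iInf]
      intro i
      exact Subgroup.lowerCentralSeries.map p i (Subgroup.mem_map_of_mem p (hx i))
    rw [hQ] at hpx
    exact hpx
  · exact Subgroup.top_lowerCentralSeries_one (G := E) ▸ hx 1
end
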